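/- arXiv:1712.00243 — 2 statements merged into one kernel-verified Lean document; each statement's English description precedes it below -/
import Mathlib

section
/- If all SINRs in the covariance matrices are equal to a common value s > 0, and Σ_n = s^{-1} I + N·diag(e_n), then as s → ∞ the quantity log₂(N) − N − (1/N) Σ_n log₂[ Σ_{n'} det(Σ_n)/det(Σ_n+Σ_{n'}) ] (built from the Jensen spatial-domain bound term) converges to log₂ N, and as s → 0⁺ it converges to 0. -/
open Filter Matrix

section SpatialMIAux

open Finset

noncomputable def SigM (N : ℕ) (s : ℝ) (n : Fin N) : Matrix (Fin N) (Fin N) ℝ :=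
  s⁻¹ • (1 : Matrix (Fin N) (Fin N) ℝ)
    + Matrix.diagonal (fun i => if i = n then (N : ℝ) else 0)

noncomputable def Gfun (N : ℕ) (s : ℝ) : ℝ :=
  (1 + 4*((N:ℝ)-1)*(1+(N:ℝ)*s)/(2+(N:ℝ)*s)^2) / 2^N

lemma prod_one_bump {N : ℕ} (c a : ℝ) (n : Fin N) :
    ∏ i : Fin N, (c + if i = n then a else 0) = (c + a) * c ^ (N - 1) := by
  rw [← Finset.mul_prod_erase Finset.univ _ (Finset.mem_univ n)]
  have h : ∀ i ∈ Finset.univ.erase n, (c + if i = n then a else 0) = c := fun i hi => by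
    simp [Finset.ne_of_mem_erase hi]
  rw [Finset.prod_congr rfl h, Finset.prod_const,
    Finset.card_erase_of_mem (Finset.mem_univ n), Finset.card_univ, Fintype.card_fin]
  simp

lemma prod_two_bump {N : ℕ} (c a : ℝ) {n n' : Fin N} (h : n ≠ n') :
    ∏ i : Fin N, (c + ((if i = n then a else 0) + (if i = n' then a else 0)))
      = (c + a)^2 * c ^ (N - 2) := by
  rw [← Finset.mul_prod_erase Finset.univ _ (Finset.mem_univ n),
    ← Finset.mul_prod_erase _ _ (Finset.mem_erase.mpr ⟨h.symm, Finset.mem_univ n'⟩)]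
  have hc : ∀ i ∈ (Finset.univ.erase n).erase n',
      (c + ((if i = n then a else 0) + (if i = n' then a else 0))) = c := fun i hi => by
    have h1 := Finset.ne_of_mem_erase hi
    have h2 := Finset.ne_of_mem_erase (Finset.mem_of_mem_erase hi)
    simp [h1, h2]
  rw [Finset.prod_congr rfl hc, Finset.prod_const,
    Finset.card_erase_of_mem (Finset.mem_erase.mpr ⟨h.symm, Finset.mem_univ n'⟩),
    Finset.card_erase_of_mem (Finset.mem_univ n), Finset.card_univ, Fintype.card_fin]
  have : N - 1 - 1 = N - 2 := by omega
  rw [this]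
  simp [h, h.symm]
  ring

lemma detSig {N : ℕ} (s : ℝ) (n : Fin N) :
    (SigM N s n).det = (s⁻¹ + N) * (s⁻¹) ^ (N - 1) := by
  rw [SigM, smul_one_eq_diagonal, diagonal_add, det_diagonal]
  exact prod_one_bump _ _ _

lemma detSum_diag {N : ℕ} (s : ℝ) (n : Fin N) :
    (SigM N s n + SigM N s n).det = (2*s⁻¹ + 2*N) * (2*s⁻¹) ^ (N - 1) := by
  simp only [SigM, smul_one_eq_diagonal, diagonal_add, det_diagonal]
  have := prod_one_bump (N := N) (2*s⁻¹) (2*N) n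
  rw [← this]
  apply Finset.prod_congr rfl
  intro i _
  split <;> ring

lemma detSum_off {N : ℕ} (s : ℝ) {n n' : Fin N} (h : n ≠ n') :
    (SigM N s n + SigM N s n').det = (2*s⁻¹ + N)^2 * (2*s⁻¹) ^ (N - 2) := by
  simp only [SigM, smul_one_eq_diagonal, diagonal_add, det_diagonal]
  have := prod_two_bump (N := N) (2*s⁻¹) (N : ℝ) h
  rw [← this]
  apply Finset.prod_congr rfl
  intro i _
  ring

lemma sum_ratio {N : ℕ} (hN : 0 < N) {s : ℝ} (hs : 0 < s) (n : Fin N) :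
    ∑ n' : Fin N, (SigM N s n).det / (SigM N s n + SigM N s n').det = Gfun N s := by
  have hs' : s ≠ 0 := ne_of_gt hs
  have ht : (0:ℝ) < s⁻¹ := by positivity
  have ht' : s⁻¹ ≠ 0 := ne_of_gt ht
  have hNpos : (0:ℝ) < N := by exact_mod_cast hN
  set a : ℝ := ((s⁻¹ + N) * (s⁻¹) ^ (N - 1)) / ((2*s⁻¹ + 2*N) * (2*s⁻¹) ^ (N - 1)) with ha_def
  set b : ℝ := ((s⁻¹ + N) * (s⁻¹) ^ (N - 1)) / ((2*s⁻¹ + N)^2 * (2*s⁻¹) ^ (N - 2)) with hb_def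
  have hterm : ∀ n' : Fin N, (SigM N s n).det / (SigM N s n + SigM N s n').det
      = b + if n' = n then a - b else 0 := by
    intro n'
    by_cases h : n' = n
    · subst h
      rw [detSig, detSum_diag, if_pos rfl]; ring
    · rw [detSig, detSum_off s (Ne.symm h), if_neg h, add_zero]
  rw [Finset.sum_congr rfl (fun n' _ => hterm n'), Finset.sum_add_distrib, Finset.sum_const,
    Finset.sum_ite_eq' Finset.univ n, if_pos (Finset.mem_univ n), Finset.card_univ,
    Fintype.card_fin, nsmul_eq_mul]
  have ha : a = 1 / 2^N := by
    have h2 : (2:ℝ)^N = 2^(N-1) * 2 := by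
      rw [← pow_succ]; congr 1; omega
    rw [ha_def, mul_pow]
    rw [div_eq_div_iff (by positivity) (by positivity)]
    rw [h2]; ring
  rcases Nat.lt_or_ge N 2 with h1 | h2
  · have hN1 : N = 1 := by omega
    subst hN1
    have : (1:ℝ) * b + (a - b) = a := by ring
    rw [Nat.cast_one, this, ha, Gfun]
    norm_num
  · obtain ⟨m, rfl⟩ : ∃ m, N = m + 2 := ⟨N - 2, by omega⟩
    have he1 : m + 2 - 1 = m + 1 := rfl
    have he2 : m + 2 - 2 = m := rfl
    have hb : b = (4*(1+((m+2:ℕ):ℝ)*s)/(2+((m+2:ℕ):ℝ)*s)^2)/2^(m+2) := by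
      rw [hb_def, he1, he2, div_eq_div_iff (by positivity) (by positivity)]
      have hss : s⁻¹ * s = 1 := inv_mul_cancel₀ hs'
      push_cast
      field_simp
      ring_nf; rw [mul_inv_cancel₀ hs']; ring
    rw [hb, ha, Gfun]
    push_cast
    have hd : ((2:ℝ)+((m:ℝ)+2)*s)^2 ≠ 0 := by positivity
    field_simp
    ring

lemma logb_two_pow (N : ℕ) : Real.logb 2 ((2:ℝ)^N) = N := by
  simp [Real.logb, Real.log_pow]
  field_simp

lemma tendsto_logb_two {l : Filter ℝ} {f : ℝ → ℝ} {L : ℝ} (hL : 0 < L)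
    (h : Tendsto f l (nhds L)) :
    Tendsto (fun x => Real.logb 2 (f x)) l (nhds (Real.logb 2 L)) := by
  exact (Real.continuousAt_logb (ne_of_gt hL)).tendsto.comp h

lemma Gfun_tendsto_atTop {N : ℕ} (hN : 0 < N) :
    Tendsto (Gfun N) atTop (nhds (1 / 2^N)) := by
  have hNpos : (0:ℝ) < N := by exact_mod_cast hN
  have hAt : Tendsto (fun s : ℝ => 2 + (N:ℝ)*s) atTop atTop :=
    tendsto_atTop_add_const_left _ 2 (Tendsto.const_mul_atTop hNpos tendsto_id)
  have hInv : Tendsto (fun s : ℝ => (2 + (N:ℝ)*s)⁻¹) atTop (nhds 0) :=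
    hAt.inv_tendsto_atTop
  have hq : Tendsto (fun s : ℝ => (1+(N:ℝ)*s)/(2+(N:ℝ)*s)^2) atTop (nhds 0) := by
    have h1 : Tendsto (fun s : ℝ => (1 - (2+(N:ℝ)*s)⁻¹) * (2+(N:ℝ)*s)⁻¹) atTop
        (nhds ((1-0)*0)) := (tendsto_const_nhds.sub hInv).mul hInv
    rw [show ((1:ℝ)-0)*0 = 0 by ring] at h1
    refine h1.congr' ?_
    filter_upwards [eventually_ge_atTop 0] with s hs0
    have hpos : (0:ℝ) < 2 + N*s := by positivity
    field_simp
    ring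
  have h2 : Tendsto (fun s : ℝ => (1 + (4*((N:ℝ)-1)) * ((1+(N:ℝ)*s)/(2+(N:ℝ)*s)^2))/2^N)
      atTop (nhds ((1 + (4*((N:ℝ)-1))*0)/2^N)) :=
    (tendsto_const_nhds.add (hq.const_mul _)).div_const _
  rw [show ((1:ℝ) + (4*((N:ℝ)-1))*0)/2^N = 1/2^N by ring] at h2
  exact h2.congr (fun s => by rw [Gfun]; ring)

lemma Gfun_tendsto_zero {N : ℕ} (hN : 0 < N) :
    Tendsto (Gfun N) (nhdsWithin 0 (Set.Ioi 0)) (nhds ((N:ℝ) / 2^N)) := by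
  have hc : ContinuousAt (Gfun N) 0 := by
    apply ContinuousAt.div_const
    apply continuousAt_const.add
    apply ContinuousAt.div
    · fun_prop
    · fun_prop
    · norm_num
  have h0 : Gfun N 0 = (N:ℝ)/2^N := by
    rw [Gfun]
    rw [div_eq_div_iff (by positivity) (by positivity)]
    ring
  rw [← h0]
  exact hc.tendsto.mono_left nhdsWithin_le_nhds

end SpatialMIAux

/-- In the equal-SINR case `SINR_{ml,n} = s` for all `n`, with
`Σ_n = s⁻¹ I + N·diag(e_n)`, the (shifted) spatial-domain MI lower bound
`B(s) = log₂ N − N − (1/N) ∑_n log₂[∑_{n'} det Σ_n / det(Σ_n + Σ_{n'})]`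
satisfies `B(s) → log₂ N` as `s → ∞` and `B(s) → 0` as `s → 0⁺`:
the lower bound is asymptotically unbiased. -/
theorem spatial_mi_bound_asymptotics (N : ℕ) (hN : 0 < N) :
    let Sig : ℝ → Fin N → Matrix (Fin N) (Fin N) ℝ := fun s n =>
      s⁻¹ • (1 : Matrix (Fin N) (Fin N) ℝ)
        + Matrix.diagonal (fun i => if i = n then (N : ℝ) else 0)
    let B : ℝ → ℝ := fun s =>
      Real.logb 2 N - N -
        (1 / N) * ∑ n : Fin N,
          Real.logb 2 (∑ n' : Fin N, (Sig s n).det / (Sig s n + Sig s n').det)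
    Tendsto B atTop (nhds (Real.logb 2 N)) ∧
      Tendsto B (nhdsWithin 0 (Set.Ioi 0)) (nhds 0) := by
  intro Sig B
  have hNR : ((N:ℝ)) ≠ 0 := Nat.cast_ne_zero.mpr hN.ne'
  have key : ∀ s : ℝ, 0 < s →
      B s = Real.logb 2 N - N - Real.logb 2 (Gfun N s) := by
    intro s hs
    show Real.logb 2 N - N -
        (1 / N) * ∑ n : Fin N,
          Real.logb 2 (∑ n' : Fin N, (SigM N s n).det / (SigM N s n + SigM N s n').det)
      = Real.logb 2 N - N - Real.logb 2 (Gfun N s)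
    rw [Finset.sum_congr rfl (fun n _ => by rw [sum_ratio hN hs n]), Finset.sum_const,
      Finset.card_univ, Fintype.card_fin, nsmul_eq_mul]
    congr 1
    field_simp
  constructor
  · have hlim : Tendsto (fun s => Real.logb 2 N - N - Real.logb 2 (Gfun N s)) atTop
        (nhds (Real.logb 2 N - N - Real.logb 2 (1/2^N))) :=
      tendsto_const_nhds.sub (tendsto_logb_two (by positivity) (Gfun_tendsto_atTop hN))
    have hval : Real.logb 2 N - (N:ℝ) - Real.logb 2 (1/2^N) = Real.logb 2 N := by
      rw [one_div, Real.logb_inv, logb_two_pow]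
      ring
    rw [hval] at hlim
    refine hlim.congr' ?_
    filter_upwards [eventually_gt_atTop 0] with s hs using (key s hs).symm
  · have hlim : Tendsto (fun s => Real.logb 2 N - N - Real.logb 2 (Gfun N s))
        (nhdsWithin 0 (Set.Ioi 0))
        (nhds (Real.logb 2 N - N - Real.logb 2 ((N:ℝ)/2^N))) :=
      tendsto_const_nhds.sub (tendsto_logb_two (by positivity) (Gfun_tendsto_zero hN))
    have hval : Real.logb 2 N - (N:ℝ) - Real.logb 2 ((N:ℝ)/2^N) = 0 := by
      rw [Real.logb_div hNR (by positivity), logb_two_pow]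
      ring
    rw [hval] at hlim
    refine hlim.congr' ?_
    filter_upwards [eventually_mem_nhdsWithin] with s hs using (key s hs).symm
end

section
/- For the equal-SINR case s = SINR for all antennas, the full SE lower bound of Theorem 1, R(s) = log₂ N − N + log₂(1 + N s) − (1/N) Σ_n log₂[Σ_{n'} det(Σ_n)/det(Σ_n+Σ_{n'})] with Σ_n = s^{-1}I + N diag(e_n), is a strictly increasing function of s > 0. -/
/-!
Every `Σ_n = s⁻¹ I + N diag(e_n)` is diagonal, so `det Σ_n / det (Σ_n + Σ_{n'})` is the product of
the entrywise ratios, all equal to `1/2` except at the entries `n` and `n'`. With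
`u = N / (2 s⁻¹ + N) = N s / (2 + N s)` this makes the inner sum `2⁻ᴺ (N - (N - 1) u²)` for every `n`,
so `R(s) = log₂ N - N + log₂ (1 + N s) - log₂ (2⁻ᴺ (N - (N - 1) u²))`. The first logarithm is
strictly increasing in `s`, and since `u` increases with `s` and `N ≥ 1`, the argument of the
second one decreases.
-/

open Set Matrix Finset

theorem det_diagonal_div_det_diagonal_add {ι K : Type*} [Fintype ι] [DecidableEq ι] [Field K]
    (d e : ι → K) :
    (diagonal d).det / (diagonal d + diagonal e).det = ∏ i, d i / (d i + e i) := by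
  rw [diagonal_add, det_diagonal, det_diagonal, prod_div_distrib]

section Bump

variable {ι : Type*} [DecidableEq ι] {a b : ℝ}

def bump (a b : ℝ) (n : ι) : ι → ℝ := fun i => a + if i = n then b else 0

theorem smul_one_add_diagonal_eq_diagonal_bump (a b : ℝ) (n : ι) :
    a • (1 : Matrix ι ι ℝ) + diagonal (fun i => if i = n then b else 0)
      = diagonal (bump a b n) := by
  rw [smul_one_eq_diagonal, diagonal_add]
  rfl

variable [Fintype ι]

theorem prod_two_mul_bump_div_bump_add_bump (ha : 0 < a) (hb : 0 ≤ b) (n n' : ι) :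
    ∏ i, 2 * (bump a b n i / (bump a b n i + bump a b n' i))
      = if n' = n then 1 else 1 - (b / (2 * a + b)) ^ 2 := by
  have h2ab : 2 * a + b ≠ 0 := by positivity
  simp only [bump]
  split_ifs with hn
  · subst hn
    refine prod_eq_one fun i _ => ?_
    have : (a + if i = n' then b else 0) ≠ 0 := by split_ifs <;> positivity
    field_simp
    ring
  · rw [Fintype.prod_eq_mul n n' (Ne.symm hn) fun i ⟨hin, hin'⟩ => by
      simp only [if_neg hin, if_neg hin']; field_simp; ring]
    simp only [↓reduceIte, if_neg hn, if_neg (Ne.symm hn)]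
    field_simp
    ring

theorem sum_det_diagonal_bump_div_det_add (ha : 0 < a) (hb : 0 ≤ b) (n : ι) :
    ∑ n', (Matrix.diagonal (bump a b n)).det
        / (Matrix.diagonal (bump a b n) + Matrix.diagonal (bump a b n')).det
      = (1 / 2) ^ Fintype.card ι *
          (Fintype.card ι - (Fintype.card ι - 1) * (b / (2 * a + b)) ^ 2) := by
  set u := b / (2 * a + b)
  have hterm : ∀ n', ∏ i, bump a b n i / (bump a b n i + bump a b n' i)
      = (1 / 2) ^ Fintype.card ι * ((1 - u ^ 2) + if n' = n then u ^ 2 else 0) := by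
    intro n'
    calc ∏ i, bump a b n i / (bump a b n i + bump a b n' i)
        = ∏ i, 1 / 2 * (2 * (bump a b n i / (bump a b n i + bump a b n' i))) := by
          simp only [one_div, inv_mul_cancel_left₀ (two_ne_zero : (2 : ℝ) ≠ 0)]
      _ = _ := by
          rw [prod_mul_distrib, prod_const, card_univ, prod_two_mul_bump_div_bump_add_bump ha hb]
          split_ifs <;> ring
  simp only [det_diagonal_div_det_diagonal_add]
  rw [sum_congr rfl fun n' _ => hterm n', ← mul_sum, sum_add_distrib, sum_ite_eq', sum_const,
    card_univ, nsmul_eq_mul, if_pos (Finset.mem_univ n)]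
  ring

end Bump

/-- In the equal-SINR case, the full SE lower bound of Theorem 1,
`R(s) = log₂ N − N + log₂(1 + N s)
        − (1/N) ∑_n log₂[∑_{n'} det Σ_n / det(Σ_n + Σ_{n'})]`
with `Σ_n = s⁻¹ I + N·diag(e_n)`, is strictly increasing in `s > 0`:
a higher SINR leads to a larger SE. -/
theorem se_lower_bound_strictMono (N : ℕ) (hN : 2 ≤ N) :
    let Sig : ℝ → Fin N → Matrix (Fin N) (Fin N) ℝ := fun s n =>
      s⁻¹ • (1 : Matrix (Fin N) (Fin N) ℝ)
        + Matrix.diagonal (fun i => if i = n then (N : ℝ) else 0)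
    let R : ℝ → ℝ := fun s =>
      Real.logb 2 N - N + Real.logb 2 (1 + N * s)
        - (1 / N) * ∑ n : Fin N,
            Real.logb 2 (∑ n' : Fin N, (Sig s n).det / (Sig s n + Sig s n').det)
    StrictMonoOn R (Ioi 0) := by
  intro Sig R
  have hN1 : (1 : ℝ) ≤ N := by exact_mod_cast (by omega : 1 ≤ N)
  set u : ℝ → ℝ := fun s => N / (2 * s⁻¹ + N)
  set G : ℝ → ℝ := fun s => (1 / 2) ^ N * (N - (N - 1) * u s ^ 2)
  have hG_pos : ∀ s, 0 < s → 0 < G s := fun s hs => by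
    have hu1 : u s ^ 2 ≤ 1 := pow_le_one₀ (by positivity) (div_le_one_of_le₀ (by
      linarith [inv_pos.2 hs]) (by positivity))
    have : 0 < (N : ℝ) - (N - 1) * u s ^ 2 := by
      nlinarith [mul_le_mul_of_nonneg_left hu1 (sub_nonneg.2 hN1)]
    positivity
  have hG_anti : AntitoneOn G (Ioi 0) := fun s (hs : 0 < s) t (ht : 0 < t) hst => by
    simp only [G, u]
    gcongr
  have hR : ∀ s, 0 < s →
      R s = Real.logb 2 N - N + Real.logb 2 (1 + N * s) - Real.logb 2 (G s) := fun s hs => by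
    have hsum : ∀ n, ∑ n', (Sig s n).det / (Sig s n + Sig s n').det = G s := fun n => by
      simp only [Sig, smul_one_add_diagonal_eq_diagonal_bump]
      rw [sum_det_diagonal_bump_div_det_add (inv_pos.2 hs) (Nat.cast_nonneg N), Fintype.card_fin]
    simp only [R, hsum, sum_const, card_univ, Fintype.card_fin, nsmul_eq_mul]
    field_simp
  rintro s (hs : 0 < s) t (ht : 0 < t) hst
  rw [hR s hs, hR t ht]
  have h1 := Real.logb_lt_logb one_lt_two (by positivity) (by gcongr : 1 + (N : ℝ) * s < 1 + N * t)
  have h2 := Real.logb_le_logb_of_le one_lt_two (hG_pos t ht) (hG_anti hs ht hst.le)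
  linarith
end
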